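/- In the quotient ring R = ℤ[β₁,β₂,γ,c₂,c₃]/(2γ, γ(β₁+γ), 2c₃) of the polynomial ring in five variables over the integers, the residue class of β₂ is a non-zero-divisor: if r ∈ R satisfies β₂·r = 0, then r = 0. -/
import Mathlib


open MvPolynomial

/-- The ideal `(2γ, γ(β₁+γ), 2c₃)` of `ℤ[β₁,β₂,γ,c₂,c₃] = MvPolynomial (Fin 5) ℤ`,
where `β₁ = X 0`, `β₂ = X 1`, `γ = X 2`, `c₂ = X 3`, `c₃ = X 4`. -/
noncomputable def Irel : Ideal (MvPolynomial (Fin 5) ℤ) :=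
  Ideal.span {2 * X 2, X 2 * (X 0 + X 2), 2 * X 4}

/-- The corresponding ideal in `ℤ[β₁,γ,c₂,c₃] = MvPolynomial (Fin 4) ℤ`. -/
noncomputable def Jrel : Ideal (MvPolynomial (Fin 4) ℤ) :=
  Ideal.span {2 * X 1, X 1 * (X 0 + X 1), 2 * X 3}

/-- The equivalence `ℤ[X₀,…,X₄] ≃ (ℤ[X₀,…,X₃])[Y]` sending `X 1` to `Y`. -/
noncomputable def Feq : MvPolynomial (Fin 5) ℤ ≃+* Polynomial (MvPolynomial (Fin 4) ℤ) :=
  ((renameEquiv ℤ (Equiv.swap (0 : Fin 5) 1)).trans (finSuccEquiv ℤ 4)).toRingEquiv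

lemma fse_X (j : Fin 4) : finSuccEquiv ℤ 4 (X j.succ) = Polynomial.C (X j) :=
  finSuccEquiv_X_succ

lemma Feq_apply (p : MvPolynomial (Fin 5) ℤ) :
    Feq p = finSuccEquiv ℤ 4 (rename (Equiv.swap (0 : Fin 5) 1) p) := rfl

lemma Feq_X1 : Feq (X 1) = Polynomial.X := by
  rw [Feq_apply, rename_X, Equiv.swap_apply_right]
  exact finSuccEquiv_X_zero

lemma Feq_X0 : Feq (X 0) = Polynomial.C (X 0) := by
  rw [Feq_apply, rename_X, Equiv.swap_apply_left,
    show (1 : Fin 5) = Fin.succ 0 from rfl]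
  exact fse_X 0

lemma Feq_X2 : Feq (X 2) = Polynomial.C (X 1) := by
  rw [Feq_apply, rename_X, Equiv.swap_apply_of_ne_of_ne (by decide) (by decide),
    show (2 : Fin 5) = Fin.succ 1 from rfl]
  exact fse_X 1

lemma Feq_X4 : Feq (X 4) = Polynomial.C (X 3) := by
  rw [Feq_apply, rename_X, Equiv.swap_apply_of_ne_of_ne (by decide) (by decide),
    show (4 : Fin 5) = Fin.succ 3 from rfl]
  exact fse_X 3

lemma map_Irel : Ideal.map (Feq : MvPolynomial (Fin 5) ℤ →+* _) Irel
    = Ideal.map (Polynomial.C : MvPolynomial (Fin 4) ℤ →+* _) Jrel := by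
  rw [Irel, Jrel, Ideal.map_span, Ideal.map_span]
  congr 1
  have h2 : Feq (2 * X 2) = Polynomial.C (2 * X 1) := by
    rw [map_mul, Feq_X2, map_mul, map_ofNat]; rfl
  have h3 : Feq (X 2 * (X 0 + X 2)) = Polynomial.C (X 1 * (X 0 + X 1)) := by
    rw [map_mul, map_add, Feq_X0, Feq_X2, map_mul, map_add]
  have h4 : Feq (2 * X 4) = Polynomial.C (2 * X 3) := by
    rw [map_mul, Feq_X4, map_mul, map_ofNat]; rfl
  simp only [RingEquiv.coe_toRingHom, Set.image_insert_eq, Set.image_singleton, h2, h3, h4]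

/-- In `R = ℤ[β₁,β₂,γ,c₂,c₃]/(2γ, γ(β₁+γ), 2c₃)` the residue class of `β₂` is a
non-zero-divisor: if `β₂ · r = 0` then `r = 0`. -/
theorem stmt_6 (r : MvPolynomial (Fin 5) ℤ ⧸ Irel)
    (h : Ideal.Quotient.mk Irel (X 1) * r = 0) : r = 0 := by
  obtain ⟨p, rfl⟩ := Ideal.Quotient.mk_surjective r
  rw [← map_mul, Ideal.Quotient.eq_zero_iff_mem] at h
  rw [Ideal.Quotient.eq_zero_iff_mem]
  -- transfer via Feq
  have key : Feq (X 1 * p) ∈ Ideal.map (Feq : MvPolynomial (Fin 5) ℤ →+* _) Irel :=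
    Ideal.mem_map_of_mem _ h
  rw [map_Irel, map_mul, Feq_X1] at key
  have hp : Feq p ∈ Ideal.map (Polynomial.C : MvPolynomial (Fin 4) ℤ →+* _) Jrel := by
    rw [Ideal.mem_map_C_iff] at key ⊢
    intro n
    have := key (n + 1)
    rwa [Polynomial.coeff_X_mul] at this
  rw [← map_Irel] at hp
  rwa [← Ideal.apply_mem_of_equiv_iff (f := Feq) (I := Irel)]
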